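/- Let T be the operator on bounded functions Q : X × A → ℝ defined by (T Q)(x_t, a_t) = E_{x_{t+1}, a_{t+1}}[ r_t + (1−λ)γ V^π(x_{t+1}) + γλ min(c, ρ_{t+1}) Q(x_{t+1}, a_{t+1}) + γλ E_{a∼π}[[1 − c/ρ_{t+1}(a)]_+ Q'(x_{t+1}, a)] ] where Q' is a fixed bounded function. Then for coefficients C_{t+1} ∈ [0,1], |T Q(x_t,a_t) − Q^π(x_t,a_t)| ≤ γ sup_{x'}[ C(x') sup_a |Q(x',a) − Q^π(x',a)| + (1 − C(x')) sup_a |Q'(x',a) − Q^π(x',a)| ], where C(x') = λ E_{a∼μ}[min(c, ρ(a|x'))]. -/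
import Mathlib

lemma tbc_key_split (c p m : ℝ) (hc : 0 < c) (hp : 0 ≤ p) (habs : 0 < p → 0 < m) :
    m * (p / m) = m * min c (p / m) + p * max (1 - c / (p / m)) 0 := by
  rcases eq_or_lt_of_le hp with hp0 | hppos
  · simp [← hp0, min_eq_right hc.le]
  · have hm := habs hppos
    have ht : 0 < p / m := div_pos hppos hm
    rcases le_total c (p / m) with h1 | h1
    · rw [min_eq_left h1, max_eq_left (by
        have : c / (p / m) ≤ 1 := (div_le_one ht).mpr h1
        linarith)]
      field_simp
      ring
    · rw [min_eq_right h1, max_eq_right (by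
        have : 1 ≤ c / (p / m) := (one_le_div ht).mpr h1
        linarith)]
      ring

lemma tbc_mul_div (p m : ℝ) (hp : 0 ≤ p) (habs : 0 < p → 0 < m) :
    m * (p / m) = p := by
  rcases eq_or_lt_of_le hp with hp0 | hppos
  · simp [← hp0]
  · field_simp [(habs hppos).ne']

theorem tbc_operator_contraction_bound
    {X A : Type*} [Fintype X] [Fintype A] [Nonempty X] [Nonempty A]
    (P : X → A → X → ℝ) (μ π : X → A → ℝ)
    (r : X → A → ℝ) (Qπ Q Q' : X → A → ℝ)
    (γ lam c : ℝ)
    (hγ0 : 0 ≤ γ) (hγ1 : γ < 1) (hlam0 : 0 ≤ lam) (hlam1 : lam ≤ 1)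
    (hc : 0 < c)
    (hP : ∀ x a, (∀ x', 0 ≤ P x a x') ∧ ∑ x', P x a x' = 1)
    (hμ : ∀ x, (∀ a, 0 ≤ μ x a) ∧ ∑ a, μ x a = 1)
    (hπ : ∀ x, (∀ a, 0 ≤ π x a) ∧ ∑ a, π x a = 1)
    (habs : ∀ x a, 0 < π x a → 0 < μ x a)
    (hfix : ∀ x a, Qπ x a =
      ∑ x', P x a x' * (r x a + (1 - lam) * γ * (∑ b, π x' b * Qπ x' b) +
        lam * γ * ∑ b, μ x' b * ((π x' b / μ x' b) * Qπ x' b))) :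
    ∀ x a,
      |(∑ x', P x a x' * (r x a + (1 - lam) * γ * (∑ b, π x' b * Qπ x' b) +
          lam * γ * (∑ b, μ x' b * (min c (π x' b / μ x' b) * Q x' b)) +
          lam * γ * (∑ b, π x' b * (max (1 - c / (π x' b / μ x' b)) 0 * Q' x' b))))
        - Qπ x a| ≤
      γ * ⨆ x', ((lam * ∑ b, μ x' b * min c (π x' b / μ x' b)) *
          (⨆ b, |Q x' b - Qπ x' b|) +
        (1 - lam * ∑ b, μ x' b * min c (π x' b / μ x' b)) *
          (⨆ b, |Q' x' b - Qπ x' b|)) := by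
  intro x a
  obtain ⟨hPpos, hPsum⟩ := hP x a
  have key : ∀ x' b, μ x' b * (π x' b / μ x' b) =
      μ x' b * min c (π x' b / μ x' b) +
      π x' b * max (1 - c / (π x' b / μ x' b)) 0 :=
    fun x' b => tbc_key_split c _ _ hc ((hπ x').1 b) (habs x' b)
  have hμρ : ∀ x' b, μ x' b * (π x' b / μ x' b) = π x' b :=
    fun x' b => tbc_mul_div _ _ ((hπ x').1 b) (habs x' b)
  have hminnn : ∀ x' b, 0 ≤ min c (π x' b / μ x' b) :=
    fun x' b => le_min hc.le (div_nonneg ((hπ x').1 b) ((hμ x').1 b))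
  have hmaxnn : ∀ x' b, (0:ℝ) ≤ max (1 - c / (π x' b / μ x' b)) 0 :=
    fun x' b => le_max_right _ _
  have hbQ : ∀ x', BddAbove (Set.range fun b => |Q x' b - Qπ x' b|) :=
    fun x' => Set.Finite.bddAbove (Set.finite_range _)
  have hbQ' : ∀ x', BddAbove (Set.range fun b => |Q' x' b - Qπ x' b|) :=
    fun x' => Set.Finite.bddAbove (Set.finite_range _)
  have hleS : ∀ x' b, |Q x' b - Qπ x' b| ≤ ⨆ b, |Q x' b - Qπ x' b| :=
    fun x' b => le_ciSup (hbQ x') b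
  have hleS' : ∀ x' b, |Q' x' b - Qπ x' b| ≤ ⨆ b, |Q' x' b - Qπ x' b| :=
    fun x' b => le_ciSup (hbQ' x') b
  have hS'nn : ∀ x', 0 ≤ ⨆ b, |Q' x' b - Qπ x' b| :=
    fun x' => le_trans (abs_nonneg _) (hleS' x' (Classical.arbitrary A))
  -- sum identity
  have hsumπmax : ∀ x', (∑ b, π x' b * max (1 - c / (π x' b / μ x' b)) 0) =
      1 - ∑ b, μ x' b * min c (π x' b / μ x' b) := by
    intro x'
    have h1 : (∑ b, π x' b * max (1 - c / (π x' b / μ x' b)) 0) =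
        (∑ b, μ x' b * (π x' b / μ x' b)) - ∑ b, μ x' b * min c (π x' b / μ x' b) := by
      rw [← Finset.sum_sub_distrib]
      exact Finset.sum_congr rfl fun b _ => by linear_combination - key x' b
    rw [h1, Finset.sum_congr rfl fun b _ => hμρ x' b, (hπ x').2]
  -- the difference rewriting
  set g : X → ℝ := fun x' => lam * γ *
      ((∑ b, μ x' b * min c (π x' b / μ x' b) * (Q x' b - Qπ x' b)) +
       ∑ b, π x' b * max (1 - c / (π x' b / μ x' b)) 0 * (Q' x' b - Qπ x' b)) with hg
  have hA : (∑ x', P x a x' * (r x a + (1 - lam) * γ * (∑ b, π x' b * Qπ x' b) +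
          lam * γ * (∑ b, μ x' b * (min c (π x' b / μ x' b) * Q x' b)) +
          lam * γ * (∑ b, π x' b * (max (1 - c / (π x' b / μ x' b)) 0 * Q' x' b))))
        - Qπ x a = ∑ x', P x a x' * g x' := by
    rw [hfix x a, ← Finset.sum_sub_distrib]
    refine Finset.sum_congr rfl fun x' _ => ?_
    have hsum : (∑ b, μ x' b * (min c (π x' b / μ x' b) * Q x' b)) +
        (∑ b, π x' b * (max (1 - c / (π x' b / μ x' b)) 0 * Q' x' b)) -
        (∑ b, μ x' b * ((π x' b / μ x' b) * Qπ x' b)) =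
        (∑ b, μ x' b * min c (π x' b / μ x' b) * (Q x' b - Qπ x' b)) +
        ∑ b, π x' b * max (1 - c / (π x' b / μ x' b)) 0 * (Q' x' b - Qπ x' b) := by
      rw [← Finset.sum_add_distrib, ← Finset.sum_sub_distrib, ← Finset.sum_add_distrib]
      exact Finset.sum_congr rfl fun b _ => by linear_combination (-Qπ x' b) * key x' b
    simp only [hg]
    linear_combination (P x a x' * (lam * γ)) * hsum
  set F : X → ℝ := fun x' => ((lam * ∑ b, μ x' b * min c (π x' b / μ x' b)) *
          (⨆ b, |Q x' b - Qπ x' b|) +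
        (1 - lam * ∑ b, μ x' b * min c (π x' b / μ x' b)) *
          (⨆ b, |Q' x' b - Qπ x' b|)) with hF
  have hgb : ∀ x', |g x'| ≤ γ * F x' := by
    intro x'
    have h1 : |∑ b, μ x' b * min c (π x' b / μ x' b) * (Q x' b - Qπ x' b)| ≤
        (∑ b, μ x' b * min c (π x' b / μ x' b)) * ⨆ b, |Q x' b - Qπ x' b| := by
      calc |∑ b, μ x' b * min c (π x' b / μ x' b) * (Q x' b - Qπ x' b)|
          ≤ ∑ b, |μ x' b * min c (π x' b / μ x' b) * (Q x' b - Qπ x' b)| :=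
            Finset.abs_sum_le_sum_abs _ _
        _ ≤ ∑ b, μ x' b * min c (π x' b / μ x' b) * ⨆ b, |Q x' b - Qπ x' b| := by
            refine Finset.sum_le_sum fun b _ => ?_
            rw [abs_mul, abs_of_nonneg (mul_nonneg ((hμ x').1 b) (hminnn x' b))]
            exact mul_le_mul_of_nonneg_left (hleS x' b)
              (mul_nonneg ((hμ x').1 b) (hminnn x' b))
        _ = (∑ b, μ x' b * min c (π x' b / μ x' b)) * ⨆ b, |Q x' b - Qπ x' b| :=
            (Finset.sum_mul _ _ _).symm
    have h2 : |∑ b, π x' b * max (1 - c / (π x' b / μ x' b)) 0 * (Q' x' b - Qπ x' b)| ≤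
        (1 - ∑ b, μ x' b * min c (π x' b / μ x' b)) * ⨆ b, |Q' x' b - Qπ x' b| := by
      rw [← hsumπmax x']
      calc |∑ b, π x' b * max (1 - c / (π x' b / μ x' b)) 0 * (Q' x' b - Qπ x' b)|
          ≤ ∑ b, |π x' b * max (1 - c / (π x' b / μ x' b)) 0 * (Q' x' b - Qπ x' b)| :=
            Finset.abs_sum_le_sum_abs _ _
        _ ≤ ∑ b, π x' b * max (1 - c / (π x' b / μ x' b)) 0 * ⨆ b, |Q' x' b - Qπ x' b| := by
            refine Finset.sum_le_sum fun b _ => ?_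
            rw [abs_mul, abs_of_nonneg (mul_nonneg ((hπ x').1 b) (hmaxnn x' b))]
            exact mul_le_mul_of_nonneg_left (hleS' x' b)
              (mul_nonneg ((hπ x').1 b) (hmaxnn x' b))
        _ = (∑ b, π x' b * max (1 - c / (π x' b / μ x' b)) 0) * ⨆ b, |Q' x' b - Qπ x' b| :=
            (Finset.sum_mul _ _ _).symm
    have habsg : |g x'| ≤ lam * γ *
        ((∑ b, μ x' b * min c (π x' b / μ x' b)) * (⨆ b, |Q x' b - Qπ x' b|) +
         (1 - ∑ b, μ x' b * min c (π x' b / μ x' b)) * ⨆ b, |Q' x' b - Qπ x' b|) := by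
      rw [hg]
      simp only
      rw [abs_mul, abs_of_nonneg (mul_nonneg hlam0 hγ0)]
      exact mul_le_mul_of_nonneg_left
        ((abs_add_le _ _).trans (add_le_add h1 h2)) (mul_nonneg hlam0 hγ0)
    refine habsg.trans ?_
    rw [hF]
    simp only
    nlinarith [mul_nonneg (mul_nonneg hγ0 (hS'nn x')) (sub_nonneg.mpr hlam1)]
  have hbF : BddAbove (Set.range F) := Set.Finite.bddAbove (Set.finite_range _)
  have hleF : ∀ x', F x' ≤ ⨆ x', F x' := fun x' => le_ciSup hbF x'
  rw [hA]
  calc |∑ x', P x a x' * g x'| ≤ ∑ x', |P x a x' * g x'| := Finset.abs_sum_le_sum_abs _ _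
    _ ≤ ∑ x', P x a x' * (γ * ⨆ x', F x') := by
        refine Finset.sum_le_sum fun x' _ => ?_
        rw [abs_mul, abs_of_nonneg (hPpos x')]
        exact mul_le_mul_of_nonneg_left
          ((hgb x').trans (mul_le_mul_of_nonneg_left (hleF x') hγ0)) (hPpos x')
    _ = γ * ⨆ x', F x' := by rw [← Finset.sum_mul, hPsum, one_mul]
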